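/- Let f: ℝ → ℝ⁺ be integrable and bounded on compacts. For θ ∈ (0,1) define v_θ := v^{g_θ} with g_θ(x) := f(x/(1−θ))/(1−θ), i.e. v_θ(x) = ∫₀^{|x|} (∫₀ʸ exp(−2∫₀^{u/(1−θ)} f(|s|)ds) du) · exp(2∫₀^{y/(1−θ)} f(|u|)du) dy. Then for every x ∈ ℝ, lim_{θ→1} v_θ(x) = x²/2 and lim_{θ→1} v_θ'(x) = x. -/

import Mathlib

open MeasureTheory Filter

/-- `f` is bounded on every compact subset of `ℝ`. -/
def BddOnCompacts (f : ℝ → ℝ) : Prop :=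
  ∀ r : ℝ, ∃ C : ℝ, ∀ x ∈ Set.Icc (-r) r, |f x| ≤ C

/-- `v_θ = v^{g_θ}` with `g_θ(x) = f(x/(1-θ))/(1-θ)`, written out explicitly. -/
noncomputable def vtheta (f : ℝ → ℝ) (θ : ℝ) (x : ℝ) : ℝ :=
  ∫ y in (0:ℝ)..|x|,
    (∫ u in (0:ℝ)..y, Real.exp (-(2 * ∫ s in (0:ℝ)..(u / (1 - θ)), f |s|))) *
      Real.exp (2 * ∫ u in (0:ℝ)..(y / (1 - θ)), f |u|)

/-!
Write `G(t) = ∫₀ᵗ f` and `c = 1/(1-θ)`, so that `v_θ(x) = V_c(|x|)` with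
`V_c(t) = ∫₀ᵗ w_c` and `w_c(y) = (∫₀ʸ e^{-2G(cu)} du) · e^{2G(cy)}`.
As `c → ∞`, `G(cu) → L := ∫₀^∞ f` for every `u > 0`, so by dominated convergence
(`0 ≤ G ≤ L` on `[0, ∞)`) `w_c(y) → y e^{-2L} e^{2L} = y`, and again by dominated
convergence, with the bound `w_c(y) ≤ y e^{2L}`, `V_c(t) → t²/2`.
Since `w_c(0) = 0`, the even function `V_c(|x|)` has derivative `sign x · w_c(|x|) → x`.
-/

open Set Topology Real

theorem hasDerivAt_comp_abs {H h : ℝ → ℝ} (hH : ∀ t, HasDerivAt H (h t) t) (h0 : h 0 = 0)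
    (t : ℝ) : HasDerivAt (fun s => H |s|) (SignType.sign t * h |t|) t := by
  rcases eq_or_ne t 0 with rfl | ht
  · have hH0 : (fun s => H s - H 0) =o[𝓝 0] fun s => s := by
      simpa [h0] using hasDerivAt_iff_isLittleO.1 (hH 0)
    have hcomp : (fun s => H |s| - H 0) =o[𝓝 0] fun s => |s| :=
      hH0.comp_tendsto (continuous_abs.tendsto' 0 0 abs_zero)
    rw [hasDerivAt_iff_isLittleO]
    simpa using hcomp.trans_isBigO (Asymptotics.isBigO_refl _ _).abs_left
  · rw [mul_comm]
    exact (hH |t|).comp t (hasDerivAt_abs ht)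

theorem tendsto_inv_one_sub_nhdsLT : Tendsto (fun θ : ℝ => (1 - θ)⁻¹) (𝓝[<] 1) atTop := by
  refine tendsto_inv_nhdsGT_zero.comp (tendsto_nhdsWithin_iff.2 ⟨?_, ?_⟩)
  · exact ((continuous_sub_left 1).tendsto' 1 0 (sub_self 1)).mono_left nhdsWithin_le_nhds
  · filter_upwards [self_mem_nhdsWithin] with θ (hθ : θ < 1) using sub_pos.2 hθ

namespace Vtheta

/-- `w_c` of the header. -/
noncomputable def scaledIntegrand (G : ℝ → ℝ) (c y : ℝ) : ℝ :=
  (∫ u in (0:ℝ)..y, exp (-(2 * G (c * u)))) * exp (2 * G (c * y))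

/-- `V_c` of the header. -/
noncomputable def scaledV (G : ℝ → ℝ) (c t : ℝ) : ℝ :=
  ∫ y in (0:ℝ)..t, scaledIntegrand G c y

theorem scaledIntegrand_zero (G : ℝ → ℝ) (c : ℝ) : scaledIntegrand G c 0 = 0 := by
  simp [scaledIntegrand]

theorem continuous_scaledIntegrand {G : ℝ → ℝ} (hG : Continuous G) (c : ℝ) :
    Continuous (scaledIntegrand G c) := by
  have hint : Continuous fun u => exp (-(2 * G (c * u))) := by fun_prop
  exact (intervalIntegral.continuous_primitive (fun a b => hint.intervalIntegrable a b) 0).mul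
    (by fun_prop)

theorem hasDerivAt_scaledV {G : ℝ → ℝ} (hG : Continuous G) (c t : ℝ) :
    HasDerivAt (scaledV G c) (scaledIntegrand G c t) t :=
  ((continuous_scaledIntegrand hG c).integral_hasStrictDerivAt 0 t).hasDerivAt

section Limits

variable {G : ℝ → ℝ} {L : ℝ}

theorem exp_neg_two_mul_le_one {a : ℝ} (ha : 0 ≤ a) : exp (-(2 * a)) ≤ 1 :=
  exp_le_one_iff.2 (by linarith)

theorem integral_exp_mem_Icc (hG : ∀ t, 0 ≤ t → 0 ≤ G t) {c y : ℝ} (hc : 0 ≤ c)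
    (hy : 0 ≤ y) : ∫ u in (0:ℝ)..y, exp (-(2 * G (c * u))) ∈ Icc 0 y := by
  refine ⟨intervalIntegral.integral_nonneg hy fun u _ => (exp_pos _).le, ?_⟩
  have hle : ∀ u ∈ uIoc 0 y, ‖exp (-(2 * G (c * u)))‖ ≤ 1 := fun u hu => by
    rw [uIoc_of_le hy] at hu
    rw [norm_of_nonneg (exp_pos _).le]
    exact exp_neg_two_mul_le_one (hG _ (mul_nonneg hc hu.1.le))
  simpa [abs_of_nonneg hy] using
    (le_abs_self _).trans (intervalIntegral.norm_integral_le_of_norm_le_const hle)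

theorem scaledIntegrand_mem_Icc (hG : ∀ t, 0 ≤ t → G t ∈ Icc 0 L) {c y : ℝ} (hc : 0 ≤ c)
    (hy : 0 ≤ y) : scaledIntegrand G c y ∈ Icc 0 (y * exp (2 * L)) := by
  obtain ⟨hψ0, hψy⟩ := integral_exp_mem_Icc (fun t ht => (hG t ht).1) hc hy
  have hGcy := (hG (c * y) (mul_nonneg hc hy)).2
  refine ⟨mul_nonneg hψ0 (exp_pos _).le, mul_le_mul hψy ?_ (exp_pos _).le hy⟩
  exact exp_le_exp.2 (by linarith)

theorem tendsto_integral_exp_neg_two_mul (hGc : Continuous G) (hG : ∀ t, 0 ≤ t → 0 ≤ G t)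
    (hGL : Tendsto G atTop (𝓝 L)) {y : ℝ} (hy : 0 ≤ y) :
    Tendsto (fun c => ∫ u in (0:ℝ)..y, exp (-(2 * G (c * u)))) atTop
      (𝓝 (y * exp (-(2 * L)))) := by
  have hdom := intervalIntegral.tendsto_integral_filter_of_dominated_convergence
    (μ := volume) (l := atTop) (F := fun c u => exp (-(2 * G (c * u)))) (fun _ => (1:ℝ))
    (Eventually.of_forall fun c => (by fun_prop : Continuous _).aestronglyMeasurable)
    (by
      filter_upwards [eventually_ge_atTop 0] with c hc
      refine ae_of_all _ fun u hu => ?_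
      rw [uIoc_of_le hy] at hu
      rw [norm_of_nonneg (exp_pos _).le]
      exact exp_neg_two_mul_le_one (hG _ (mul_nonneg hc hu.1.le)))
    intervalIntegrable_const
    (ae_of_all _ fun u hu => by
      rw [uIoc_of_le hy] at hu
      exact ((hGL.comp (tendsto_id.atTop_mul_const hu.1)).const_mul 2).neg.rexp)
  simpa using hdom

theorem tendsto_scaledIntegrand (hGc : Continuous G) (hG : ∀ t, 0 ≤ t → 0 ≤ G t)
    (hGL : Tendsto G atTop (𝓝 L)) {y : ℝ} (hy : 0 ≤ y) :
    Tendsto (fun c => scaledIntegrand G c y) atTop (𝓝 y) := by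
  rcases hy.eq_or_lt with rfl | hy
  · simpa only [scaledIntegrand_zero] using tendsto_const_nhds
  have hexp : Tendsto (fun c => exp (2 * G (c * y))) atTop (𝓝 (exp (2 * L))) :=
    ((hGL.comp (tendsto_id.atTop_mul_const hy)).const_mul 2).rexp
  have hprod := (tendsto_integral_exp_neg_two_mul hGc hG hGL hy.le).mul hexp
  rwa [mul_assoc, ← exp_add, neg_add_cancel, exp_zero, mul_one] at hprod

theorem tendsto_scaledV (hGc : Continuous G) (hG : ∀ t, 0 ≤ t → G t ∈ Icc 0 L)
    (hGL : Tendsto G atTop (𝓝 L)) {t : ℝ} (ht : 0 ≤ t) :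
    Tendsto (fun c => scaledV G c t) atTop (𝓝 (t ^ 2 / 2)) := by
  have hdom := intervalIntegral.tendsto_integral_filter_of_dominated_convergence
    (μ := volume) (l := atTop) (F := scaledIntegrand G) (fun _ => t * exp (2 * L))
    (Eventually.of_forall fun c => (continuous_scaledIntegrand hGc c).aestronglyMeasurable)
    (by
      filter_upwards [eventually_ge_atTop 0] with c hc
      refine ae_of_all _ fun y hy => ?_
      rw [uIoc_of_le ht] at hy
      obtain ⟨h0, h1⟩ := scaledIntegrand_mem_Icc hG hc hy.1.le
      rw [norm_of_nonneg h0]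
      exact h1.trans (mul_le_mul_of_nonneg_right hy.2 (exp_pos _).le))
    intervalIntegrable_const
    (ae_of_all _ fun y hy => by
      rw [uIoc_of_le ht] at hy
      exact tendsto_scaledIntegrand hGc (fun s hs => (hG s hs).1) hGL hy.1.le)
  simpa [scaledV, integral_id] using hdom

end Limits

theorem integral_mem_Icc_integral_Ioi {f : ℝ → ℝ} (hf0 : ∀ x, 0 ≤ f x)
    (hf : IntegrableOn f (Ioi 0)) {t : ℝ} (ht : 0 ≤ t) :
    ∫ s in (0:ℝ)..t, f s ∈ Icc 0 (∫ s in Ioi 0, f s) := by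
  rw [intervalIntegral.integral_of_le ht]
  exact ⟨setIntegral_nonneg measurableSet_Ioc fun s _ => hf0 s,
    setIntegral_mono_set hf (ae_of_all _ hf0) Ioc_subset_Ioi_self.eventuallyLE⟩

theorem vtheta_eq_scaledV {f : ℝ → ℝ} {θ : ℝ} (hθ : θ < 1) :
    vtheta f θ = fun x => scaledV (fun t => ∫ s in (0:ℝ)..t, f s) (1 - θ)⁻¹ |x| := by
  have hprim : ∀ u, 0 ≤ u →
      ∫ s in (0:ℝ)..(u / (1 - θ)), f |s| = ∫ s in (0:ℝ)..(1 - θ)⁻¹ * u, f s := by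
    intro u hu
    rw [div_eq_inv_mul]
    refine intervalIntegral.integral_congr fun s hs => ?_
    rw [uIcc_of_le (mul_nonneg (inv_nonneg.2 (sub_pos.2 hθ).le) hu)] at hs
    simp only [abs_of_nonneg hs.1]
  funext x
  refine intervalIntegral.integral_congr fun y hy => ?_
  rw [uIcc_of_le (abs_nonneg x)] at hy
  simp only [scaledIntegrand, hprim y hy.1]
  congr 1
  refine intervalIntegral.integral_congr fun u hu => ?_
  rw [uIcc_of_le hy.1] at hu
  simp only [hprim u hu.1]

end Vtheta

open Vtheta

theorem vtheta_limits_general (f : ℝ → ℝ) (hf0 : ∀ x, 0 ≤ f x) (hf : Integrable f) (x : ℝ) :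
    Tendsto (fun θ : ℝ => vtheta f θ x)
      (nhdsWithin 1 (Set.Ioo (0:ℝ) 1)) (nhds (x ^ 2 / 2)) ∧
    Tendsto (fun θ : ℝ => deriv (vtheta f θ) x)
      (nhdsWithin 1 (Set.Ioo (0:ℝ) 1)) (nhds x) := by
  set G := fun t => ∫ s in (0:ℝ)..t, f s
  have hGc : Continuous G := hf.continuous_primitive 0
  have hG : ∀ t, 0 ≤ t → G t ∈ Icc 0 (∫ s in Ioi 0, f s) := fun t ht =>
    integral_mem_Icc_integral_Ioi hf0 hf.integrableOn ht
  have hGL : Tendsto G atTop (𝓝 (∫ s in Ioi 0, f s)) :=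
    intervalIntegral_tendsto_integral_Ioi 0 hf.integrableOn tendsto_id
  have hc : Tendsto (fun θ : ℝ => (1 - θ)⁻¹) (𝓝[Ioo 0 1] 1) atTop :=
    tendsto_inv_one_sub_nhdsLT.mono_left (nhdsWithin_mono _ Ioo_subset_Iio_self)
  have heq : ∀ᶠ θ in 𝓝[Ioo 0 1] 1, vtheta f θ = fun x => scaledV G (1 - θ)⁻¹ |x| := by
    filter_upwards [self_mem_nhdsWithin] with θ hθ using vtheta_eq_scaledV hθ.2
  constructor
  · have hlim := (tendsto_scaledV hGc hG hGL (abs_nonneg x)).comp hc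
    rw [sq_abs] at hlim
    exact hlim.congr' (heq.mono fun θ h => (congrFun h x).symm)
  · have hw := (tendsto_scaledIntegrand hGc (fun t ht => (hG t ht).1) hGL
      (abs_nonneg x)).comp hc
    have hlim := hw.const_mul (SignType.sign x : ℝ)
    rw [sign_mul_abs] at hlim
    refine hlim.congr' (heq.mono fun θ h => ?_)
    dsimp only [Function.comp]
    rw [h, (hasDerivAt_comp_abs (hasDerivAt_scaledV hGc _) (scaledIntegrand_zero G _) x).deriv]

theorem vtheta_limits (f : ℝ → ℝ) (hf0 : ∀ x, 0 ≤ f x) (hf : Integrable f)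
    (hb : BddOnCompacts f) (x : ℝ) :
    Tendsto (fun θ : ℝ => vtheta f θ x)
      (nhdsWithin 1 (Set.Ioo (0:ℝ) 1)) (nhds (x ^ 2 / 2)) ∧
    Tendsto (fun θ : ℝ => deriv (vtheta f θ) x)
      (nhdsWithin 1 (Set.Ioo (0:ℝ) 1)) (nhds x) :=
  vtheta_limits_general f hf0 hf x
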